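/- If G' is obtained from a locally finite graph G by adding, for some fixed k, arbitrarily many edges between node pairs at distance ≤ k plus only finitely many further edges between node pairs at finite distance, then G' has the same lower and upper internal scaling dimensions as G at every node. -/
import Mathlib

open Filter Topology

/-- The metric ball of radius `n` around `x` in the graph `G`. -/
noncomputable def gball {V : Type*} (G : SimpleGraph V) (x : V) (n : ℕ) : Set V :=
  {z | G.edist x z ≤ n}

/-- The boundary sphere of radius `n` around `x` in the graph `G`. -/
noncomputable def gsphere {V : Type*} (G : SimpleGraph V) (x : V) : ℕ → Set V
  | 0 => {x}
  | n + 1 => gball G x (n + 1) \ gball G x n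

private lemma gball_finite' {V : Type*} (G : SimpleGraph V) (hlf : G.LocallyFinite) (x : V) :
    ∀ n : ℕ, {z | G.edist x z ≤ (n : ℕ∞)}.Finite := by
  intro n
  induction n with
  | zero =>
    have h0 : {z | G.edist x z ≤ ((0:ℕ) : ℕ∞)} = {x} := by
      ext z
      simp [Set.mem_setOf_eq, nonpos_iff_eq_zero, SimpleGraph.edist_eq_zero_iff,
        Set.mem_singleton_iff, eq_comm]
      exact ⟨fun h => (SimpleGraph.edist_eq_zero_iff.mp h.symm), fun h => by simp [h, SimpleGraph.edist_self]⟩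
    rw [h0]; exact Set.finite_singleton x
  | succ n ih =>
    have hnb : ∀ y : V, (G.neighborSet y).Finite := fun y => by
      haveI := hlf y; exact (G.neighborSet y).toFinite
    apply Set.Finite.subset (ih.union (ih.biUnion (fun y _ => hnb y)))
    intro z hz
    have hz' : G.edist x z ≤ ((n + 1 : ℕ) : ℕ∞) := hz
    by_cases h : G.edist x z ≤ (n : ℕ∞)
    · exact Or.inl h
    · have hne : G.edist x z ≠ ⊤ := fun ht => by
        rw [ht] at hz'
        exact (ENat.coe_lt_top (n+1)).ne (top_le_iff.mp hz')
      obtain ⟨p, hp⟩ := SimpleGraph.exists_walk_of_edist_ne_top hne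
      cases hq : p.reverse with
      | nil =>
        exact Or.inl (by simp [SimpleGraph.edist_self])
      | cons hadj q =>
        rename_i y
        have hl1 : (p.length : ℕ∞) ≤ ((n + 1 : ℕ) : ℕ∞) := by rw [hp]; exact hz'
        have hl2 : p.length ≤ n + 1 := by exact_mod_cast hl1
        have hly : q.length ≤ n := by
          have h5 : p.reverse.length = q.length + 1 := by rw [hq]; simp
          rw [SimpleGraph.Walk.length_reverse] at h5
          omega
        have hxy : G.edist x y ≤ (n : ℕ∞) := by
          calc G.edist x y ≤ (q.reverse.length : ℕ∞) := SimpleGraph.edist_le q.reverse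
            _ = (q.length : ℕ∞) := by rw [SimpleGraph.Walk.length_reverse]
            _ ≤ (n : ℕ∞) := by exact_mod_cast hly
        exact Or.inr (Set.mem_biUnion hxy hadj.symm)

private lemma div_le_div_nonneg_denom {x y c : ℝ} (h : x ≤ y) (hc : 0 ≤ c) :
    x / c ≤ y / c := by
  rcases hc.eq_or_lt with h0 | h0
  · simp [← h0]
  · exact (div_le_div_iff_of_pos_right h0).mpr h

private lemma eps_le {x L : ℝ} (hL : 0 ≤ L)
    (h : ∀ ε : ℝ, 0 < ε → x ≤ (1 + ε) * (L + ε)) : x ≤ L := by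
  by_contra hx
  push_neg at hx
  set ε : ℝ := min 1 ((x - L) / (L + 3)) with hεdef
  have hε : 0 < ε := lt_min one_pos (div_pos (by linarith) (by linarith))
  have h2 := h ε hε
  have h3 : ε ≤ 1 := min_le_left _ _
  have h4 : ε ≤ (x - L) / (L + 3) := min_le_right _ _
  have h5 : ε * (L + 3) ≤ x - L := by
    have hL3 : (0:ℝ) < L + 3 := by linarith
    calc ε * (L + 3) ≤ ((x - L) / (L + 3)) * (L + 3) :=
          mul_le_mul_of_nonneg_right h4 hL3.le
      _ = x - L := by field_simp
  nlinarith [hε.le, sq_nonneg ε]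

private lemma lim_eq_of_sandwich (f g : ℕ → ℕ) (C : ℕ) (hC : 1 ≤ C)
    (hf1 : ∀ n, 1 ≤ f n) (hg1 : ∀ n, 1 ≤ g n) (hfm : Monotone f)
    (hfg : ∀ n, f n ≤ g n) (hgf : ∀ n, g n ≤ f (C * n)) :
    liminf (fun n : ℕ => Real.log (g n) / Real.log n) atTop =
      liminf (fun n : ℕ => Real.log (f n) / Real.log n) atTop ∧
    limsup (fun n : ℕ => Real.log (g n) / Real.log n) atTop =
      limsup (fun n : ℕ => Real.log (f n) / Real.log n) atTop := by
  set a : ℕ → ℝ := fun n => Real.log (f n) / Real.log n with ha_def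
  set b : ℕ → ℝ := fun n => Real.log (g n) / Real.log n with hb_def
  have hC0 : 0 < C := hC
  have hCR : (0:ℝ) < (C:ℝ) := by exact_mod_cast hC0
  have hlogn : ∀ n : ℕ, 0 ≤ Real.log n := Real.log_natCast_nonneg
  have hfpos : ∀ n, (0:ℝ) < (f n : ℝ) := fun n => by exact_mod_cast hf1 n
  have hgpos : ∀ n, (0:ℝ) < (g n : ℝ) := fun n => by exact_mod_cast hg1 n
  have ha0 : ∀ n, 0 ≤ a n := fun n =>
    div_nonneg (Real.log_natCast_nonneg _) (hlogn n)
  have hb0 : ∀ n, 0 ≤ b n := fun n =>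
    div_nonneg (Real.log_natCast_nonneg _) (hlogn n)
  have hab : ∀ n, a n ≤ b n := fun n =>
    div_le_div_nonneg_denom
      (Real.log_le_log (hfpos n) (by exact_mod_cast hfg n)) (hlogn n)
  have hlogten : Tendsto (fun n : ℕ => Real.log n) atTop atTop :=
    Real.tendsto_log_atTop.comp tendsto_natCast_atTop_atTop
  have hmulten : Tendsto (fun n : ℕ => C * n) atTop atTop :=
    tendsto_atTop_mono (fun n => Nat.le_mul_of_pos_left n hC0) tendsto_id
  have hdivten : Tendsto (fun n : ℕ => n / C) atTop atTop := by
    apply tendsto_atTop_atTop.mpr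
    intro M
    refine ⟨C * M, fun n hn => (Nat.le_div_iff_mul_le hC0).mpr ?_⟩
    rw [Nat.mul_comm]; exact hn
  -- key upper bound
  have keyB : ∀ c ε : ℝ, 0 ≤ c → 0 < ε → (∀ᶠ m in atTop, a m ≤ c) →
      ∀ᶠ n in atTop, b n ≤ (1 + ε) * c := by
    intro c ε hc hε h
    have h1 : ∀ᶠ n in atTop, a (C * n) ≤ c := hmulten.eventually h
    have h2 : ∀ᶠ n : ℕ in atTop, Real.log C / ε ≤ Real.log n :=
      hlogten.eventually_ge_atTop _
    filter_upwards [h1, h2, eventually_ge_atTop 2] with n hn1 hn2 hn3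
    have hn1R : (1:ℝ) < (n:ℝ) := by exact_mod_cast (by omega : 1 < n)
    have hn0 : (0:ℝ) < Real.log n := Real.log_pos hn1R
    have hlogC : Real.log C ≤ ε * Real.log n := by
      have := (div_le_iff₀ hε).mp hn2
      linarith [this]
    have hCn1 : (1:ℝ) < ((C * n : ℕ) : ℝ) := by
      have : 2 ≤ C * n := le_trans hn3 (Nat.le_mul_of_pos_left n hC0)
      exact_mod_cast (by omega : 1 < C * n)
    have hCnpos : (0:ℝ) < Real.log ((C * n : ℕ) : ℝ) := Real.log_pos hCn1
    have hsplit : Real.log ((C * n : ℕ) : ℝ) = Real.log C + Real.log n := by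
      push_cast
      rw [Real.log_mul (by positivity) (by positivity)]
    have hb' : b n ≤ Real.log (f (C * n)) / Real.log n :=
      div_le_div_nonneg_denom
        (Real.log_le_log (hgpos n) (by exact_mod_cast hgf n)) (hlogn n)
    have hA : Real.log (f (C * n)) = a (C * n) * Real.log ((C * n : ℕ) : ℝ) :=
      (div_mul_cancel₀ _ hCnpos.ne').symm
    refine hb'.trans ?_
    rw [div_le_iff₀ hn0, hA]
    have hstep1 : a (C * n) * Real.log ((C * n : ℕ) : ℝ)
        ≤ c * Real.log ((C * n : ℕ) : ℝ) :=
      mul_le_mul_of_nonneg_right hn1 hCnpos.le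
    refine hstep1.trans ?_
    rw [hsplit]
    nlinarith [hn0.le]
  -- key lower bound
  have keyA : ∀ c ε : ℝ, 0 < ε → (∀ᶠ m in atTop, c ≤ b m) →
      ∀ᶠ n in atTop, c ≤ (1 + ε) * a n := by
    intro c ε hε h
    have h1 : ∀ᶠ n in atTop, c ≤ b (n / C) := hdivten.eventually h
    have h2 : ∀ᶠ n : ℕ in atTop, Real.log ((2 * C : ℕ) : ℝ) / ε ≤ Real.log ((n / C : ℕ) : ℝ) :=
      (hlogten.comp hdivten).eventually_ge_atTop _
    have h3 : ∀ᶠ n : ℕ in atTop, 2 ≤ n / C := hdivten.eventually (eventually_ge_atTop 2)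
    filter_upwards [h1, h2, h3, eventually_ge_atTop (2 * C)] with n hn1 hn2 hn3 hn4
    have hm1 : (1:ℝ) < ((n / C : ℕ) : ℝ) := by exact_mod_cast (by omega : 1 < n / C)
    have hm0 : (0:ℝ) < Real.log ((n / C : ℕ) : ℝ) := Real.log_pos hm1
    -- the Nat inequality n ≤ 2*C*(n/C)
    have hnatineq : n ≤ 2 * (C * (n / C)) := by
      have hdm := Nat.div_add_mod n C
      have hml := Nat.mod_lt n hC0
      generalize C * (n / C) = t at hdm ⊢
      omega
    have hnleR : (n : ℝ) ≤ ((2 * C : ℕ) : ℝ) * ((n / C : ℕ) : ℝ) := by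
      have : (n:ℝ) ≤ ((2 * (C * (n/C)) : ℕ) : ℝ) := by exact_mod_cast hnatineq
      refine this.trans (le_of_eq ?_)
      push_cast; ring
    have hn2pos : (0:ℝ) < ((2 * C : ℕ) : ℝ) := by positivity
    have hlog2C : Real.log ((2 * C : ℕ) : ℝ) ≤ ε * Real.log ((n / C : ℕ) : ℝ) := by
      have := (div_le_iff₀ hε).mp hn2
      linarith [this]
    have hnn : 1 ≤ n := by omega
    have hnposR : (0:ℝ) < (n:ℝ) := by exact_mod_cast hnn
    have hlognle : Real.log n ≤ (1 + ε) * Real.log ((n / C : ℕ) : ℝ) := by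
      have h6 : Real.log n ≤ Real.log (((2 * C : ℕ) : ℝ) * ((n / C : ℕ) : ℝ)) :=
        Real.log_le_log hnposR hnleR
      rw [Real.log_mul hn2pos.ne' (by positivity)] at h6
      linarith
    -- chain
    have hmono : Real.log (f (C * (n / C))) ≤ Real.log (f n) :=
      Real.log_le_log (hfpos _) (by exact_mod_cast hfm (Nat.mul_div_le n C))
    have hb2 : b (n / C) ≤ Real.log (f (C * (n / C))) / Real.log ((n / C : ℕ) : ℝ) :=
      div_le_div_nonneg_denom
        (Real.log_le_log (hgpos _) (by exact_mod_cast hgf (n / C))) (hlogn _)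
    have hchain : c ≤ Real.log (f n) / Real.log ((n / C : ℕ) : ℝ) :=
      hn1.trans (hb2.trans (div_le_div_nonneg_denom hmono (hlogn _)))
    refine hchain.trans ?_
    rw [div_le_iff₀ hm0]
    have hn0' : (0:ℝ) < Real.log n := Real.log_pos (by exact_mod_cast (show 1 < n by omega))
    have han : a n * Real.log n = Real.log (f n) := div_mul_cancel₀ _ hn0'.ne'
    have h7 : a n * Real.log n ≤ a n * ((1 + ε) * Real.log ((n / C : ℕ) : ℝ)) :=
      mul_le_mul_of_nonneg_left hlognle (ha0 n)
    rw [han] at h7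
    exact h7.trans (le_of_eq (by ring))
  constructor
  · -- liminf
    rw [liminf_eq, liminf_eq]
    have hIsub : {c | ∀ᶠ n in atTop, c ≤ a n} ⊆ {c | ∀ᶠ n in atTop, c ≤ b n} :=
      fun c hc => hc.mono fun n h => h.trans (hab n)
    have h0a : (0:ℝ) ∈ {c | ∀ᶠ n in atTop, c ≤ a n} := Eventually.of_forall ha0
    have h0b : (0:ℝ) ∈ {c | ∀ᶠ n in atTop, c ≤ b n} := Eventually.of_forall hb0
    by_cases hbdd : BddAbove {c | ∀ᶠ n in atTop, c ≤ b n}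
    · have hIabdd : BddAbove {c | ∀ᶠ n in atTop, c ≤ a n} := hbdd.mono hIsub
      apply le_antisymm
      · set L := sSup {c | ∀ᶠ n in atTop, c ≤ a n} with hLdef
        apply csSup_le ⟨0, h0b⟩
        intro c hc
        have hL0 : 0 ≤ L := le_csSup hIabdd h0a
        apply eps_le hL0
        intro ε hε
        have hfreq : ∃ᶠ n in atTop, a n < L + ε := by
          by_contra hcon
          rw [not_frequently] at hcon
          have hmem : L + ε ∈ {c | ∀ᶠ n in atTop, c ≤ a n} :=
            hcon.mono fun n h => not_lt.mp h
          have := le_csSup hIabdd hmem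
          linarith
        obtain ⟨n, hn1, hn2⟩ := (hfreq.and_eventually (keyA c ε hε hc)).exists
        nlinarith [ha0 n]
      · exact csSup_le_csSup hbdd ⟨0, h0a⟩ hIsub
    · have hIa_unbdd : ¬ BddAbove {c | ∀ᶠ n in atTop, c ≤ a n} := by
        rintro ⟨Q, hQ⟩
        apply hbdd
        refine ⟨2 * Q, fun c hc => ?_⟩
        have h2 := keyA c 1 one_pos hc
        have hmem : c / 2 ∈ {c | ∀ᶠ n in atTop, c ≤ a n} :=
          h2.mono fun n h => by linarith
        have := hQ hmem
        linarith
      rw [csSup_of_not_bddAbove hbdd, csSup_of_not_bddAbove hIa_unbdd]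
  · -- limsup
    rw [limsup_eq, limsup_eq]
    have hSsub : {c | ∀ᶠ n in atTop, b n ≤ c} ⊆ {c | ∀ᶠ n in atTop, a n ≤ c} :=
      fun c hc => hc.mono fun n h => (hab n).trans h
    have hSnonneg : ∀ c ∈ {c | ∀ᶠ n in atTop, a n ≤ c}, (0:ℝ) ≤ c := by
      intro c hc
      obtain ⟨n, hn⟩ := hc.exists
      exact (ha0 n).trans hn
    rcases Set.eq_empty_or_nonempty {c | ∀ᶠ n in atTop, a n ≤ c} with he | ⟨c0, hc0⟩
    · have heb : {c | ∀ᶠ n in atTop, b n ≤ c} = ∅ :=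
        Set.subset_empty_iff.mp (he ▸ hSsub)
      rw [he, heb]
    · have hc00 : (0:ℝ) ≤ c0 := hSnonneg c0 hc0
      have hSb2 : (1 + 1) * c0 ∈ {c | ∀ᶠ n in atTop, b n ≤ c} :=
        keyB c0 1 hc00 one_pos hc0
      have hbb : BddBelow {c | ∀ᶠ n in atTop, b n ≤ c} :=
        ⟨0, fun c hc => hSnonneg c (hSsub hc)⟩
      apply le_antisymm
      · set L := sInf {c | ∀ᶠ n in atTop, a n ≤ c} with hLdef
        have hL0 : 0 ≤ L := le_csInf ⟨c0, hc0⟩ hSnonneg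
        apply eps_le hL0
        intro ε hε
        obtain ⟨c, hcm, hclt⟩ := exists_lt_of_csInf_lt ⟨c0, hc0⟩
          (lt_add_of_pos_right L hε)
        have hc0' : 0 ≤ c := hSnonneg c hcm
        have hmem := keyB c ε hc0' hε hcm
        have h8 : sInf {c | ∀ᶠ n in atTop, b n ≤ c} ≤ (1 + ε) * c := csInf_le hbb hmem
        nlinarith
      · exact csInf_le_csInf ⟨0, fun c hc => hSnonneg c hc⟩ ⟨(1 + 1) * c0, hSb2⟩ hSsub

theorem scaling_dimension_stable_under_generalized_edge_insertion {V : Type*}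
    (G G' : SimpleGraph V) (hlf : G.LocallyFinite) (k : ℕ) (hk : 1 ≤ k)
    (hle : G ≤ G')
    (hreach : ∀ y z : V, G'.Adj y z → G.Reachable y z)
    (hfin : {p : V × V | G'.Adj p.1 p.2 ∧ ¬ G.Adj p.1 p.2 ∧ ¬ (G.edist p.1 p.2 ≤ k)}.Finite) :
    ∀ x : V,
      Filter.liminf (fun n : ℕ => Real.log (gball G' x n).ncard / Real.log n) Filter.atTop =
        Filter.liminf (fun n : ℕ => Real.log (gball G x n).ncard / Real.log n) Filter.atTop ∧
      Filter.limsup (fun n : ℕ => Real.log (gball G' x n).ncard / Real.log n) Filter.atTop =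
        Filter.limsup (fun n : ℕ => Real.log (gball G x n).ncard / Real.log n) Filter.atTop := by
  intro x
  classical
  set M : ℕ := hfin.toFinset.sup (fun p => (G.edist p.1 p.2).toNat) with hM
  set C : ℕ := max k M with hCdef
  have hC1 : 1 ≤ C := le_trans hk (le_max_left _ _)
  have hC : ∀ a b : V, G'.Adj a b → G.edist a b ≤ (C : ℕ∞) := by
    intro a b hab
    by_cases h1 : G.edist a b ≤ (k : ℕ∞)
    · exact h1.trans (by exact_mod_cast le_max_left k M)
    · have h2 : ¬ G.Adj a b := fun h => h1 (by
        rw [SimpleGraph.edist_eq_one_iff_adj.mpr h]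
        exact_mod_cast hk)
      have hmem : (a, b) ∈ hfin.toFinset := hfin.mem_toFinset.mpr ⟨hab, h2, h1⟩
      have hne : G.edist a b ≠ ⊤ := SimpleGraph.edist_ne_top_iff_reachable.mpr (hreach a b hab)
      have hMb : (G.edist a b).toNat ≤ M :=
        Finset.le_sup (f := fun p : V × V => (G.edist p.1 p.2).toNat) hmem
      calc G.edist a b = (((G.edist a b).toNat : ℕ) : ℕ∞) := (ENat.coe_toNat hne).symm
        _ ≤ (M : ℕ∞) := by exact_mod_cast hMb
        _ ≤ (C : ℕ∞) := by exact_mod_cast le_max_right k M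
  have hwalk : ∀ (u v : V) (p : G'.Walk u v), G.edist u v ≤ (C : ℕ∞) * p.length := by
    intro u v p
    induction p with
    | nil => simp [SimpleGraph.edist_self]
    | cons h q ih =>
      calc G.edist _ _ ≤ G.edist _ _ + G.edist _ _ := G.edist_triangle
        _ ≤ (C : ℕ∞) + (C : ℕ∞) * q.length := add_le_add (hC _ _ h) ih
        _ = (C : ℕ∞) * (q.length + 1) := by ring
        _ = (C : ℕ∞) * ((SimpleGraph.Walk.cons h q).length : ℕ∞) := by
            rw [SimpleGraph.Walk.length_cons]; push_cast; ring
  have hedist : ∀ u v : V, G.edist u v ≤ (C : ℕ∞) * G'.edist u v := by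
    intro u v
    rcases eq_or_ne (G'.edist u v) ⊤ with h | h
    · rw [h, ENat.mul_top (by exact_mod_cast (by omega : C ≠ 0))]
      exact le_top
    · obtain ⟨p, hp⟩ := SimpleGraph.exists_walk_of_edist_ne_top h
      rw [← hp]
      exact hwalk u v p
  have hfinball : ∀ n : ℕ, (gball G x n).Finite := fun n => gball_finite' G hlf x n
  have hmono : ∀ {m n : ℕ}, m ≤ n → gball G x m ⊆ gball G x n := by
    intro m n h z hz
    have hz' : G.edist x z ≤ (m : ℕ∞) := hz
    show G.edist x z ≤ (n : ℕ∞)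
    exact le_trans hz' (by exact_mod_cast h)
  have hsub1 : ∀ n : ℕ, gball G x n ⊆ gball G' x n := by
    intro n z hz
    have hz' : G.edist x z ≤ (n : ℕ∞) := hz
    show G'.edist x z ≤ (n : ℕ∞)
    exact le_trans (SimpleGraph.edist_anti hle) hz'
  have hsub2 : ∀ n : ℕ, gball G' x n ⊆ gball G x (C * n) := by
    intro n z hz
    have hz' : G'.edist x z ≤ (n : ℕ∞) := hz
    show G.edist x z ≤ ((C * n : ℕ) : ℕ∞)
    calc G.edist x z ≤ (C : ℕ∞) * G'.edist x z := hedist x z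
      _ ≤ (C : ℕ∞) * (n : ℕ∞) := mul_le_mul_right hz' _
      _ = ((C * n : ℕ) : ℕ∞) := by push_cast; ring
  have hfinball' : ∀ n : ℕ, (gball G' x n).Finite := fun n =>
    (hfinball (C * n)).subset (hsub2 n)
  have hxmem : ∀ n : ℕ, x ∈ gball G x n := fun n => by
    show G.edist x x ≤ (n : ℕ∞)
    simp [SimpleGraph.edist_self]
  have hxmem' : ∀ n : ℕ, x ∈ gball G' x n := fun n => hsub1 n (hxmem n)
  exact lim_eq_of_sandwich (fun n => (gball G x n).ncard) (fun n => (gball G' x n).ncard)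
    C hC1
    (fun n => (Set.ncard_pos (hfinball n)).mpr ⟨x, hxmem n⟩)
    (fun n => (Set.ncard_pos (hfinball' n)).mpr ⟨x, hxmem' n⟩)
    (fun m n h => Set.ncard_le_ncard (hmono h) (hfinball n))
    (fun n => Set.ncard_le_ncard (hsub1 n) (hfinball' n))
    (fun n => Set.ncard_le_ncard (hsub2 n) (hfinball (C * n)))
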